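/- Let q ≥ 1 and let G be an abelian group of permutations of ℤ/qℤ such that every element of G is an involution of the form x ↦ εx + β with ε ∈ {1, −1} and β ∈ ℤ/qℤ. Then the order of G divides 4; equivalently, G is isomorphic to a subgroup of (ℤ/2ℤ)², and there exists β ∈ ℤ/qℤ such that every element of G is one of the maps x ↦ x, x ↦ x + h, x ↦ −x + β, x ↦ −x + β + h, where h ∈ ℤ/qℤ is an element with 2h = 0. -/
import Mathlib


/-- Let `q ≥ 1` and let `G` be an abelian group of permutations
of `ℤ/qℤ` such that every element of `G` is an involution of the form
`x ↦ ε x + β` with `ε ∈ {1, -1}`.  Then the order of `G` divides `4`;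
equivalently, `G` is isomorphic to a subgroup of `(ℤ/2ℤ)²`, and there exists
`β ∈ ℤ/qℤ` such that every element of `G` is one of the maps `x ↦ x`,
`x ↦ x + h`, `x ↦ -x + β`, `x ↦ -x + β + h`, where `h` satisfies `2h = 0`. -/
theorem group_of_abelian_affine_involutions (q : ℕ) (hq : 1 ≤ q)
    (G : Subgroup (Equiv.Perm (ZMod q)))
    (hcomm : ∀ g ∈ G, ∀ h ∈ G, g * h = h * g)
    (hinv : ∀ g ∈ G, g * g = 1)
    (haff : ∀ g ∈ G, ∃ ε β : ZMod q, (ε = 1 ∨ ε = -1) ∧ ∀ x : ZMod q, g x = ε * x + β) :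
    Nat.card G ∣ 4 ∧
    (∃ f : G →* Multiplicative (ZMod 2 × ZMod 2), Function.Injective f) ∧
    ∃ β h : ZMod q, h + h = 0 ∧ ∀ g ∈ G,
      (∀ x : ZMod q, g x = x) ∨ (∀ x : ZMod q, g x = x + h) ∨
      (∀ x : ZMod q, g x = -x + β) ∨ (∀ x : ZMod q, g x = -x + β + h) := by
  classical
  haveI : NeZero q := ⟨by omega⟩
  -- Every element of G has the form x ↦ (g 1 - g 0) x + g 0, with g 1 - g 0 ∈ {1, -1}.
  have hform : ∀ g ∈ G, ((g 1 - g 0 = 1) ∨ (g 1 - g 0 = -1)) ∧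
      ∀ x : ZMod q, g x = (g 1 - g 0) * x + g 0 := by
    intro g hg
    obtain ⟨ε, b, hε, hgx⟩ := haff g hg
    have h0 : g 0 = b := by rw [hgx]; ring
    have h1 : g 1 = ε + b := by rw [hgx]; ring
    have hE : g 1 - g 0 = ε := by rw [h0, h1]; ring
    exact ⟨by rw [hE]; exact hε, fun x => by rw [hgx x, hE, h0]⟩
  -- 2-torsion in ZMod q has at most one nonzero element.
  have key2 : ∀ x : ℕ, x < q → q ∣ (x + x) → (x = 0 ∨ x + x = q) := by
    intro x hx hdvd
    obtain ⟨k, hk⟩ := hdvd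
    match k with
    | 0 => left; omega
    | 1 => right; omega
    | (k+2) =>
      exfalso
      have h2 : q * (k+2) < q * 2 := by rw [← hk]; omega
      have := Nat.lt_of_mul_lt_mul_left h2
      omega
  have tor : ∀ a b : ZMod q, a + a = 0 → b + b = 0 → a = 0 ∨ b = 0 ∨ a = b := by
    intro a b ha hb
    have ha' : (a.val + a.val) % q = 0 := by
      have := congrArg ZMod.val ha
      rwa [ZMod.val_add, ZMod.val_zero] at this
    have hb' : (b.val + b.val) % q = 0 := by
      have := congrArg ZMod.val hb
      rwa [ZMod.val_add, ZMod.val_zero] at this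
    rcases key2 a.val (ZMod.val_lt a) (Nat.dvd_of_mod_eq_zero ha') with h | h
    · left
      apply ZMod.val_injective q
      simpa using h
    rcases key2 b.val (ZMod.val_lt b) (Nat.dvd_of_mod_eq_zero hb') with h' | h'
    · right; left
      apply ZMod.val_injective q
      simpa using h'
    · right; right
      exact ZMod.val_injective q (by omega : a.val = b.val)
  -- choose the (at most one) nonzero 2-torsion element h₀
  obtain ⟨h₀, hh2, hhmax⟩ :
      ∃ h₀ : ZMod q, h₀ + h₀ = 0 ∧ ∀ s : ZMod q, s + s = 0 → s = 0 ∨ s = h₀ := by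
    by_cases hh : ∃ s : ZMod q, s ≠ 0 ∧ s + s = 0
    · obtain ⟨s₀, hs0, hs2⟩ := hh
      refine ⟨s₀, hs2, fun s hs => ?_⟩
      rcases tor s s₀ hs hs2 with h | h | h
      · exact Or.inl h
      · exact absurd h hs0
      · exact Or.inr h
    · exact ⟨0, by ring, fun s hs => Or.inl (by
        by_contra h
        exact hh ⟨s, h, hs⟩)⟩
  have hnegh : -h₀ = h₀ := by linear_combination -hh2
  -- involution constraint on offsets
  have hsq : ∀ g ∈ G, (g 1 - g 0) * g 0 + g 0 = 0 := by
    intro g hg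
    have h1 : (g * g) 0 = (0 : ZMod q) := by rw [hinv g hg]; rfl
    rw [Equiv.Perm.mul_apply] at h1
    rw [(hform g hg).2 (g 0)] at h1
    exact h1
  have htrans : ∀ g ∈ G, g 1 - g 0 = 1 → g 0 = 0 ∨ g 0 = h₀ := by
    intro g hg hE
    apply hhmax
    have := hsq g hg
    rw [hE] at this
    linear_combination this
  -- the common base point of the reflections
  obtain ⟨β₀, hβ⟩ : ∃ β₀ : ZMod q, ∀ g ∈ G, g 1 - g 0 ≠ 1 → g 0 = β₀ ∨ g 0 = β₀ + h₀ := by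
    by_cases hr : ∃ g₀, g₀ ∈ G ∧ g₀ 1 - g₀ 0 ≠ 1
    · obtain ⟨g₀, hg₀, hE₀⟩ := hr
      refine ⟨g₀ 0, fun g hg hE => ?_⟩
      have e1 : g 1 - g 0 = -1 := (hform g hg).1.resolve_left hE
      have e2 : g₀ 1 - g₀ 0 = -1 := (hform g₀ hg₀).1.resolve_left hE₀
      have hc : (g * g₀) 0 = (g₀ * g) 0 := by rw [hcomm g hg g₀ hg₀]
      rw [Equiv.Perm.mul_apply, Equiv.Perm.mul_apply,
        (hform g hg).2 (g₀ 0), (hform g₀ hg₀).2 (g 0), e1, e2] at hc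
      have hd : (g 0 - g₀ 0) + (g 0 - g₀ 0) = 0 := by linear_combination hc
      rcases hhmax _ hd with h | h
      · left; linear_combination h
      · right; linear_combination h
    · exact ⟨0, fun g hg hE => absurd ⟨g, hg, hE⟩ hr⟩
  -- master classification
  have classify : ∀ g ∈ G,
      (g 1 - g 0 = 1 ∧ (g 0 = 0 ∨ g 0 = h₀) ∧ ∀ x, g x = x + g 0) ∨
      (g 1 - g 0 ≠ 1 ∧ (g 0 = β₀ ∨ g 0 = β₀ + h₀) ∧ ∀ x, g x = -x + g 0) := by
    intro g hg
    by_cases hE : g 1 - g 0 = 1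
    · exact Or.inl ⟨hE, htrans g hg hE,
        fun x => by rw [(hform g hg).2 x, hE]; ring⟩
    · have e : g 1 - g 0 = -1 := (hform g hg).1.resolve_left hE
      exact Or.inr ⟨hE, hβ g hg hE,
        fun x => by rw [(hform g hg).2 x, e]; ring⟩
  -- the two "coordinates"
  set E : G → ZMod q := fun g =>
    if (g : Equiv.Perm (ZMod q)) 1 - (g : Equiv.Perm (ZMod q)) 0 = 1 then 1 else -1 with hE_def
  set B : G → ZMod q := fun g =>
    if (g : Equiv.Perm (ZMod q)) 1 - (g : Equiv.Perm (ZMod q)) 0 = 1 then 0 else β₀ with hB_def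
  set e : G → ZMod 2 := fun g =>
    if (g : Equiv.Perm (ZMod q)) 1 - (g : Equiv.Perm (ZMod q)) 0 = 1 then 0 else 1 with he_def
  set t : G → ZMod 2 := fun g =>
    if (g : Equiv.Perm (ZMod q)) 0 = B g then 0 else 1 with ht_def
  set c : ZMod 2 → ZMod q := fun s => if s = 0 then 0 else h₀ with hc_def
  -- basic facts
  have hEval : ∀ g : G, (g : Equiv.Perm (ZMod q)) 1 - (g : Equiv.Perm (ZMod q)) 0 = E g := by
    intro g
    by_cases h : (g : Equiv.Perm (ZMod q)) 1 - (g : Equiv.Perm (ZMod q)) 0 = 1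
    · rw [hE_def]; simp only [if_pos h]; exact h
    · rw [hE_def]; simp only [if_neg h]
      exact (hform g g.2).1.resolve_left h
  have hF1 : ∀ (g : G) (x : ZMod q),
      (g : Equiv.Perm (ZMod q)) x = E g * x + (g : Equiv.Perm (ZMod q)) 0 := by
    intro g x
    rw [(hform g g.2).2 x, hEval g]
  have hF2 : ∀ g : G, (g : Equiv.Perm (ZMod q)) 0 = B g + c (t g) := by
    intro g
    by_cases h : (g : Equiv.Perm (ZMod q)) 0 = B g
    · rw [ht_def]; simp only [if_pos h, hc_def]
      simpa using h
    · rw [ht_def]; simp only [if_neg h, hc_def]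
      norm_num
      -- need : g 0 = B g + h₀
      rcases classify g g.2 with ⟨hE1, hor, _⟩ | ⟨hE1, hor, _⟩
      · rw [hB_def] at h ⊢
        simp only [if_pos hE1] at h ⊢
        rcases hor with h' | h'
        · exact absurd (by simpa using h') h
        · rw [h']; ring
      · rw [hB_def] at h ⊢
        simp only [if_neg hE1] at h ⊢
        rcases hor with h' | h'
        · exact absurd h' h
        · exact h'
  have hval : ∀ g : G,
      ((g : Equiv.Perm (ZMod q)) 1 - (g : Equiv.Perm (ZMod q)) 0 = 1 →
        e g = 0 ∧ E g = 1 ∧ B g = 0) ∧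
      ((g : Equiv.Perm (ZMod q)) 1 - (g : Equiv.Perm (ZMod q)) 0 ≠ 1 →
        e g = 1 ∧ E g = -1 ∧ B g = β₀) := by
    intro g
    constructor
    · intro h
      refine ⟨?_, ?_, ?_⟩
      · simp only [he_def]; rw [if_pos h]
      · simp only [hE_def]; rw [if_pos h]
      · simp only [hB_def]; rw [if_pos h]
    · intro h
      refine ⟨?_, ?_, ?_⟩
      · simp only [he_def]; rw [if_neg h]
      · simp only [hE_def]; rw [if_neg h]
      · simp only [hB_def]; rw [if_neg h]
  -- test value for a product
  have hEmulval : ∀ g h : G,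
      ((g * h : G) : Equiv.Perm (ZMod q)) 1 - ((g * h : G) : Equiv.Perm (ZMod q)) 0
        = E g * E h := by
    intro g h
    have hmm : ((g * h : G) : Equiv.Perm (ZMod q)) = (g : Equiv.Perm (ZMod q)) * h := rfl
    rw [hmm]
    rw [Equiv.Perm.mul_apply, Equiv.Perm.mul_apply, hF1 g ((h : Equiv.Perm (ZMod q)) 1),
      hF1 g ((h : Equiv.Perm (ZMod q)) 0)]
    have := hEval h
    linear_combination E g * this
  have hOmul : ∀ g h : G,
      ((g * h : G) : Equiv.Perm (ZMod q)) 0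
        = E g * (h : Equiv.Perm (ZMod q)) 0 + (g : Equiv.Perm (ZMod q)) 0 := by
    intro g h
    have hmm : ((g * h : G) : Equiv.Perm (ZMod q)) = (g : Equiv.Perm (ZMod q)) * h := rfl
    rw [hmm, Equiv.Perm.mul_apply, hF1 g]
  -- e and B are "multiplicative"
  have hkey : ∀ g h : G, e (g * h) = e g + e h ∧ B (g * h) = E g * B h + B g := by
    intro g h
    by_cases hg1 : (g : Equiv.Perm (ZMod q)) 1 - (g : Equiv.Perm (ZMod q)) 0 = 1 <;>
    by_cases hh1 : (h : Equiv.Perm (ZMod q)) 1 - (h : Equiv.Perm (ZMod q)) 0 = 1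
    · obtain ⟨heg, hEg, hBg⟩ := (hval g).1 hg1
      obtain ⟨heh, hEh, hBh⟩ := (hval h).1 hh1
      have hgh : ((g * h : G) : Equiv.Perm (ZMod q)) 1 -
          ((g * h : G) : Equiv.Perm (ZMod q)) 0 = 1 := by
        rw [hEmulval, hEg, hEh]; ring
      obtain ⟨hegh, _, hBgh⟩ := (hval (g * h)).1 hgh
      rw [hegh, heg, heh, hBgh, hBg, hBh, hEg]
      exact ⟨by decide, by ring⟩
    · obtain ⟨heg, hEg, hBg⟩ := (hval g).1 hg1
      obtain ⟨heh, hEh, hBh⟩ := (hval h).2 hh1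
      have hgh : ¬ (((g * h : G) : Equiv.Perm (ZMod q)) 1 -
          ((g * h : G) : Equiv.Perm (ZMod q)) 0 = 1) := by
        rw [hEmulval, hEg, hEh]
        intro hcon
        apply hh1
        rw [hEval h, hEh]
        linear_combination hcon
      obtain ⟨hegh, _, hBgh⟩ := (hval (g * h)).2 hgh
      rw [hegh, heg, heh, hBgh, hBg, hBh, hEg]
      exact ⟨by decide, by ring⟩
    · obtain ⟨heg, hEg, hBg⟩ := (hval g).2 hg1
      obtain ⟨heh, hEh, hBh⟩ := (hval h).1 hh1
      have hgh : ¬ (((g * h : G) : Equiv.Perm (ZMod q)) 1 -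
          ((g * h : G) : Equiv.Perm (ZMod q)) 0 = 1) := by
        rw [hEmulval, hEg, hEh]
        intro hcon
        apply hg1
        rw [hEval g, hEg]
        linear_combination hcon
      obtain ⟨hegh, _, hBgh⟩ := (hval (g * h)).2 hgh
      rw [hegh, heg, heh, hBgh, hBg, hBh, hEg]
      exact ⟨by decide, by ring⟩
    · obtain ⟨heg, hEg, hBg⟩ := (hval g).2 hg1
      obtain ⟨heh, hEh, hBh⟩ := (hval h).2 hh1
      have hgh : ((g * h : G) : Equiv.Perm (ZMod q)) 1 -
          ((g * h : G) : Equiv.Perm (ZMod q)) 0 = 1 := by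
        rw [hEmulval, hEg, hEh]; ring
      obtain ⟨hegh, _, hBgh⟩ := (hval (g * h)).1 hgh
      rw [hegh, heg, heh, hBgh, hBg, hBh, hEg]
      exact ⟨by decide, by ring⟩
  -- c is additive and negation-invariant
  have h01 : ∀ s : ZMod 2, s = 0 ∨ s = 1 := by decide
  have hc0 : c 0 = 0 := by simp [hc_def]
  have hc1 : c 1 = h₀ := by simp [hc_def]
  have hcadd : ∀ s s' : ZMod 2, c (s + s') = c s + c s' := by
    intro s s'
    rcases h01 s with hs | hs <;> rcases h01 s' with hs' | hs' <;> rw [hs, hs']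
    · rw [show (0 : ZMod 2) + 0 = 0 by decide, hc0]; ring
    · rw [show (0 : ZMod 2) + 1 = 1 by decide, hc0, hc1]; ring
    · rw [show (1 : ZMod 2) + 0 = 1 by decide, hc0, hc1]; ring
    · rw [show (1 : ZMod 2) + 1 = 0 by decide, hc0, hc1]; linear_combination -hh2
  have hcneg : ∀ (g : G) (s : ZMod 2), E g * c s = c s := by
    intro g s
    by_cases h : (g : Equiv.Perm (ZMod q)) 1 - (g : Equiv.Perm (ZMod q)) 0 = 1
    · rw [((hval g).1 h).2.1]; ring
    · rw [((hval g).2 h).2.1]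
      rcases h01 s with hs | hs
      · rw [hs, hc0]; ring
      · rw [hs, hc1]; linear_combination -hh2
  -- if h₀ = 0 then t is identically 0
  have hth0 : h₀ = 0 → ∀ g : G, t g = 0 := by
    intro hz g
    have h2 := hF2 g
    simp only [ht_def]
    rw [if_pos]
    rw [h2]
    rcases h01 (t g) with hs | hs
    · rw [hs, hc0]; ring
    · rw [hs, hc1, hz]; ring
  -- t is additive
  have htadd : ∀ g h : G, t (g * h) = t g + t h := by
    intro g h
    have ho : ((g * h : G) : Equiv.Perm (ZMod q)) 0 = B (g * h) + c (t g + t h) := by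
      rw [hOmul, hF2 g, hF2 h, (hkey g h).2, hcadd]
      linear_combination (hcneg g (t h))
    by_cases hz : h₀ = 0
    · rw [hth0 hz (g * h), hth0 hz g, hth0 hz h]; ring
    · have hcinj : ∀ s : ZMod 2, (c s = 0 ↔ s = 0) := by
        intro s
        rcases h01 s with hs | hs
        · rw [hs, hc0]; simp
        · rw [hs, hc1]
          constructor
          · intro hcc; exact absurd hcc hz
          · intro hcc; exact absurd hcc (by decide)
      simp only [ht_def]
      by_cases hs : t g + t h = 0
      · rw [if_pos]
        · exact hs.symm
        · rw [ho, (hcinj _).2 hs]; ring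
      · rw [if_neg]
        · exact ((h01 _).resolve_left hs).symm
        · rw [ho]
          intro hcon
          apply hs
          apply (hcinj _).1
          linear_combination hcon
  -- the homomorphism
  set f : G →* Multiplicative (ZMod 2 × ZMod 2) :=
    MonoidHom.mk' (fun g => Multiplicative.ofAdd (e g, t g))
      (fun g h => by
        have h1 := (hkey g h).1
        have h2 := htadd g h
        simp only [h1, h2]
        rfl) with hf_def
  have hfinj : Function.Injective f := by
    intro g h hgh
    have h1 : e g = e h ∧ t g = t h := by
      have hp : ((e g, t g) : ZMod 2 × ZMod 2) = (e h, t h) := by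
        simpa [hf_def] using hgh
      exact ⟨congrArg Prod.fst hp, congrArg Prod.snd hp⟩
    have hEB : E g = E h ∧ B g = B h := by
      by_cases hg1 : (g : Equiv.Perm (ZMod q)) 1 - (g : Equiv.Perm (ZMod q)) 0 = 1 <;>
      by_cases hh1 : (h : Equiv.Perm (ZMod q)) 1 - (h : Equiv.Perm (ZMod q)) 0 = 1
      · rw [((hval g).1 hg1).2.1, ((hval h).1 hh1).2.1,
          ((hval g).1 hg1).2.2, ((hval h).1 hh1).2.2]
        exact ⟨rfl, rfl⟩
      · exfalso
        have := h1.1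
        rw [((hval g).1 hg1).1, ((hval h).2 hh1).1] at this
        exact absurd this (by decide)
      · exfalso
        have := h1.1
        rw [((hval g).2 hg1).1, ((hval h).1 hh1).1] at this
        exact absurd this (by decide)
      · rw [((hval g).2 hg1).2.1, ((hval h).2 hh1).2.1,
          ((hval g).2 hg1).2.2, ((hval h).2 hh1).2.2]
        exact ⟨rfl, rfl⟩
    have hOeq : (g : Equiv.Perm (ZMod q)) 0 = (h : Equiv.Perm (ZMod q)) 0 := by
      rw [hF2 g, hF2 h, hEB.2, h1.2]
    have : (g : Equiv.Perm (ZMod q)) = (h : Equiv.Perm (ZMod q)) := by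
      ext x
      rw [hF1 g x, hF1 h x, hEB.1, hOeq]
    exact Subtype.ext this
  refine ⟨?_, ⟨f, hfinj⟩, β₀, h₀, hh2, ?_⟩
  · have := Subgroup.card_dvd_of_injective f hfinj
    have h4 : Nat.card (Multiplicative (ZMod 2 × ZMod 2)) = 4 := by
      simp [Nat.card_eq_fintype_card]
    rwa [h4] at this
  · intro g hg
    rcases classify g hg with ⟨_, h0 | h0, hx⟩ | ⟨_, h0 | h0, hx⟩
    · exact Or.inl fun x => by rw [hx x, h0]; ring
    · exact Or.inr (Or.inl fun x => by rw [hx x, h0])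
    · exact Or.inr (Or.inr (Or.inl fun x => by rw [hx x, h0]))
    · exact Or.inr (Or.inr (Or.inr fun x => by rw [hx x, h0]; ring))
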